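/- arXiv:1209.4456 — 6 statements merged into one kernel-verified Lean document; each statement's English description precedes it below -/
import Mathlib

section
/- Let D be a digraph on n ≥ 3 vertices containing a cycle C_m of some length m with 2 ≤ m ≤ n−1, and let x be a vertex of D not contained in this cycle. If d(x, C_m) ≥ m+1, then D contains a cycle C_k of length k for every k with 2 ≤ k ≤ m+1. -/
/-!
Put `t = k - 2`. The indices `j` with `x → c j` and the indices `j` with `c (j + t) → x`
form two subsets of `ℤ/m` of total size at least `m + 1`, so some `j` lies in both.
Then `x → c j → c (j + 1) → ⋯ → c (j + t) → x` is a cycle of length `t + 2 = k`; its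
vertices are distinct because `t < m`.
-/

variable {V : Type*}

/-- Rotate an index of `Fin m` forward by `k` steps (indices mod `m`). -/
def finRot {m : ℕ} (i : Fin m) (k : ℕ) : Fin m :=
  ⟨(i.val + k) % m, Nat.mod_lt _ (Nat.lt_of_le_of_lt (Nat.zero_le i.val) i.isLt)⟩

/-- `c : Fin k → V` is a directed cycle of length `k`: distinct vertices with an
arc from each vertex to the next one (cyclically). -/
def IsCycle (A : V → V → Prop) {k : ℕ} (c : Fin k → V) : Prop :=
  Function.Injective c ∧ ∀ i, A (c i) (c (finRot i 1))

/-- Out-degree of `x`. -/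
def outDeg [Fintype V] (A : V → V → Prop) [DecidableRel A] (x : V) : ℕ :=
  (Finset.univ.filter fun y => A x y).card

/-- In-degree of `x`. -/
def inDeg [Fintype V] (A : V → V → Prop) [DecidableRel A] (x : V) : ℕ :=
  (Finset.univ.filter fun y => A y x).card

/-- Degree of `x`. -/
def deg [Fintype V] (A : V → V → Prop) [DecidableRel A] (x : V) : ℕ :=
  outDeg A x + inDeg A x

/-- Out-degree of `x` into the set `S`. -/
def outDegOn (A : V → V → Prop) [DecidableRel A] (x : V) (S : Finset V) : ℕ :=
  (S.filter fun y => A x y).card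

/-- In-degree of `x` from the set `S`. -/
def inDegOn (A : V → V → Prop) [DecidableRel A] (x : V) (S : Finset V) : ℕ :=
  (S.filter fun y => A y x).card

/-- Degree of `x` with respect to the set `S`. -/
def degOn (A : V → V → Prop) [DecidableRel A] (x : V) (S : Finset V) : ℕ :=
  outDegOn A x S + inDegOn A x S

/-- The set of indices of the subpath of a cycle on `Fin m` that goes from
index `β` to index `α` (inclusive), following the orientation of the cycle. -/
def cycSeg {m : ℕ} (β α : Fin m) : Finset (Fin m) :=
  (Finset.range ((α.val + m - β.val) % m + 1)).image (finRot β)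

def IsPath (A : V → V → Prop) {n : ℕ} (p : Fin (n + 1) → V) : Prop :=
  Function.Injective p ∧ ∀ i : Fin n, A (p i.castSucc) (p i.succ)

theorem exists_mem_add_mem_of_card_lt {G : Type*} [AddGroup G] [Fintype G] [DecidableEq G]
    {P Q : Finset G} (hPQ : Fintype.card G < P.card + Q.card) (a : G) :
    ∃ j ∈ P, j + a ∈ Q := by
  have hcard : (Q.image (· - a)).card = Q.card :=
    Finset.card_image_of_injective _ sub_left_injective
  obtain ⟨j, hj⟩ := Finset.inter_nonempty_of_card_lt_card_add_card (Finset.subset_univ P)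
    (Finset.subset_univ (Q.image (· - a))) (by rwa [Finset.card_univ, hcard])
  obtain ⟨hjP, q, hq, rfl⟩ := Finset.mem_inter.1 hj |>.imp_right Finset.mem_image.1
  exact ⟨q - a, hjP, by rwa [sub_add_cancel]⟩

theorem finRot_zero {m : ℕ} (i : Fin m) : finRot i 0 = i := by
  ext
  simp [finRot, Nat.mod_eq_of_lt i.isLt]

section Rotation

open Fin.NatCast

theorem finRot_eq_add {m : ℕ} [NeZero m] (i : Fin m) (k : ℕ) :
    finRot i k = i + (k : Fin m) := by
  ext
  simp [finRot, Fin.val_add, Fin.val_natCast, Nat.add_mod_mod]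

theorem exists_finRot_mem_of_card_lt {m : ℕ} {P Q : Finset (Fin m)}
    (hPQ : m < P.card + Q.card) (t : ℕ) : ∃ j ∈ P, finRot j t ∈ Q := by
  have : NeZero m := ⟨by
    have hP := P.card_le_univ
    have hQ := Q.card_le_univ
    simp only [Fintype.card_fin] at hP hQ
    omega⟩
  simp only [finRot_eq_add]
  exact exists_mem_add_mem_of_card_lt (by rwa [Fintype.card_fin]) _

theorem IsCycle.isPath_finRot {A : V → V → Prop} {m : ℕ} {c : Fin m → V} (hc : IsCycle A c)
    (j : Fin m) {t : ℕ} (ht : t < m) : IsPath A fun i : Fin (t + 1) => c (finRot j i) := by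
  have : NeZero m := ⟨by omega⟩
  refine ⟨fun a b hab => ?_, fun i => ?_⟩
  · have hab' : j + (a.val : Fin m) = j + (b.val : Fin m) := by
      simpa only [finRot_eq_add] using hc.1 hab
    have h := congrArg Fin.val (add_left_cancel hab')
    rw [Fin.val_natCast, Fin.val_natCast, Nat.mod_eq_of_lt (by omega),
      Nat.mod_eq_of_lt (by omega)] at h
    exact Fin.ext h
  · simpa [finRot_eq_add, add_assoc] using hc.2 (finRot j i)

end Rotation

theorem IsPath.isCycle_cons {A : V → V → Prop} {n : ℕ} {p : Fin (n + 1) → V}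
    (hp : IsPath A p) {x : V} (hx : ∀ i, x ≠ p i) (hfirst : A x (p 0))
    (hlast : A (p (Fin.last n)) x) :
    IsCycle A (Fin.cons x p : Fin (n + 2) → V) := by
  refine ⟨?_, fun i => ?_⟩
  · exact Fin.cons_injective_iff.2 ⟨fun ⟨i, hi⟩ => hx i hi.symm, hp.1⟩
  · induction i using Fin.cases with
    | zero =>
      have h1 : finRot (0 : Fin (n + 2)) 1 = Fin.succ 0 := by ext; simp [finRot]
      simpa [h1] using hfirst
    | succ k =>
      induction k using Fin.lastCases with
      | last =>
        have h0 : finRot (Fin.last (n + 1)) 1 = 0 := by ext; simp [finRot]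
        simpa [h0] using hlast
      | cast l =>
        have hs : finRot l.castSucc.succ 1 = l.succ.succ := by
          ext; simp [finRot, Nat.mod_eq_of_lt (by omega : l.val + 1 + 1 < n + 2)]
        simpa [hs] using hp.2 l

theorem degOn_image_of_injective [DecidableEq V] (A : V → V → Prop) [DecidableRel A] (x : V)
    {m : ℕ} {c : Fin m → V} (hc : Function.Injective c) :
    degOn A x (Finset.image c Finset.univ) =
      (Finset.univ.filter fun i => A x (c i)).card +
        (Finset.univ.filter fun i => A (c i) x).card := by
  simp only [degOn, outDegOn, inDegOn, Finset.filter_image, Finset.card_image_of_injective _ hc]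

theorem cycles_of_all_lengths_of_large_degree_on_cycle_general
    [DecidableEq V] (A : V → V → Prop) [DecidableRel A]
    (m : ℕ)
    (c : Fin m → V) (hc : IsCycle A c)
    (x : V) (hx : ∀ i : Fin m, x ≠ c i)
    (hdeg : m + 1 ≤ degOn A x (Finset.image c Finset.univ)) :
    ∀ k : ℕ, 2 ≤ k → k ≤ m + 1 → ∃ d : Fin k → V, IsCycle A d := by
  intro k hk2 hkm
  obtain ⟨t, rfl⟩ : ∃ t, k = t + 2 := ⟨k - 2, by omega⟩
  rw [degOn_image_of_injective A x hc.1] at hdeg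
  obtain ⟨j, hxj, hjx⟩ := exists_finRot_mem_of_card_lt hdeg t
  rw [Finset.mem_filter] at hxj hjx
  have hpath := hc.isPath_finRot j (by omega : t < m)
  exact ⟨_, hpath.isCycle_cons (fun _ => hx _) (by simpa [finRot_zero] using hxj.2) hjx.2⟩

/-- Lemma 1, Häggkvist–Thomassen. If a digraph on `n ≥ 3` vertices
contains a cycle `C_m` (`2 ≤ m ≤ n-1`) and a vertex `x` off the cycle with
`d(x, C_m) ≥ m+1`, then it contains a cycle of every length `k` with `2 ≤ k ≤ m+1`. -/
theorem cycles_of_all_lengths_of_large_degree_on_cycle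
    [Fintype V] [DecidableEq V] (A : V → V → Prop) [DecidableRel A]
    (hirr : ∀ v : V, ¬ A v v)
    (hn : 3 ≤ Fintype.card V)
    (m : ℕ) (hm2 : 2 ≤ m) (hm : m ≤ Fintype.card V - 1)
    (c : Fin m → V) (hc : IsCycle A c)
    (x : V) (hx : ∀ i : Fin m, x ≠ c i)
    (hdeg : m + 1 ≤ degOn A x (Finset.image c Finset.univ)) :
    ∀ k : ℕ, 2 ≤ k → k ≤ m + 1 → ∃ d : Fin k → V, IsCycle A d :=
  cycles_of_all_lengths_of_large_degree_on_cycle_general A m c hc x hx hdeg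
end

section
/- Let D be a digraph on n ≥ 3 vertices containing a directed path P := x₁x₂…x_m with 2 ≤ m ≤ n−1, and let x be a vertex not contained in this path. If d(x,P) ≥ m+2, then there exists an index i with 1 ≤ i ≤ m−1 such that both x_i x and x x_{i+1} are arcs of D; that is, D contains the directed path x₁x₂…x_i x x_{i+1}…x_m of length m (x can be inserted into P). -/
variable {V : Type*}

/-- Lemma 2 (i). If a digraph on `n ≥ 3` vertices contains a path
`x₁x₂…x_m` (`2 ≤ m ≤ n-1`) and a vertex `x` off the path with `d(x,P) ≥ m+2`,
then `x` can be inserted into the path. -/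
theorem insertion_of_degree_ge_add_two
    [Fintype V] [DecidableEq V] (A : V → V → Prop) [DecidableRel A]
    (hirr : ∀ v : V, ¬ A v v)
    (hn : 3 ≤ Fintype.card V)
    (m : ℕ) (hm2 : 2 ≤ m) (hm : m ≤ Fintype.card V - 1)
    (p : Fin m → V) (hinj : Function.Injective p)
    (hpath : ∀ i j : Fin m, (j : ℕ) = (i : ℕ) + 1 → A (p i) (p j))
    (x : V) (hx : ∀ i : Fin m, x ≠ p i)
    (hdeg : m + 2 ≤ degOn A x (Finset.image p Finset.univ)) :
    ∃ i j : Fin m, (j : ℕ) = (i : ℕ) + 1 ∧ A (p i) x ∧ A x (p j) := by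
  by_contra hcon
  push_neg at hcon
  -- indicator functions
  set a : ℕ → ℕ := fun k => if h : k < m then (if A x (p ⟨k, h⟩) then 1 else 0) else 0 with ha
  set b : ℕ → ℕ := fun k => if h : k < m then (if A (p ⟨k, h⟩) x then 1 else 0) else 0 with hb
  have hdeg' : degOn A x (Finset.image p Finset.univ)
      = (∑ k ∈ Finset.range m, a k) + (∑ k ∈ Finset.range m, b k) := by
    have h1 : outDegOn A x (Finset.image p Finset.univ) = ∑ k ∈ Finset.range m, a k := by
      rw [outDegOn, Finset.filter_image, Finset.card_image_of_injective _ hinj,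
        Finset.card_filter, ← Fin.sum_univ_eq_sum_range]
      refine Finset.sum_congr rfl fun i _ => ?_
      simp [ha, i.isLt]
    have h2 : inDegOn A x (Finset.image p Finset.univ) = ∑ k ∈ Finset.range m, b k := by
      rw [inDegOn, Finset.filter_image, Finset.card_image_of_injective _ hinj,
        Finset.card_filter, ← Fin.sum_univ_eq_sum_range]
      refine Finset.sum_congr rfl fun i _ => ?_
      simp [hb, i.isLt]
    rw [degOn, h1, h2]
  obtain ⟨m', rfl⟩ : ∃ m', m = m' + 1 := ⟨m - 1, (Nat.succ_pred_eq_of_pos (by omega)).symm⟩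
  have hsa : ∑ k ∈ Finset.range (m' + 1), a k = (∑ k ∈ Finset.range m', a (k + 1)) + a 0 :=
    Finset.sum_range_succ' a m'
  have hsb : ∑ k ∈ Finset.range (m' + 1), b k = (∑ k ∈ Finset.range m', b k) + b m' :=
    Finset.sum_range_succ b m'
  have hpair : ∀ k ∈ Finset.range m', a (k + 1) + b k ≤ 1 := by
    intro k hk
    rw [Finset.mem_range] at hk
    have hk1 : k + 1 < m' + 1 := by omega
    have hk0 : k < m' + 1 := by omega
    have := hcon ⟨k, hk0⟩ ⟨k + 1, hk1⟩ rfl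
    simp only [ha, hb, dif_pos hk1, dif_pos hk0]
    by_cases h1 : A (p ⟨k, hk0⟩) x
    · have h2 : ¬ A x (p ⟨k + 1, hk1⟩) := fun h2 => this h1 h2
      simp [h1, h2]
    · simp [h1]
      split <;> omega
  have hsum : ∑ k ∈ Finset.range m', (a (k + 1) + b k) ≤ m' := by
    calc ∑ k ∈ Finset.range m', (a (k + 1) + b k) ≤ ∑ k ∈ Finset.range m', 1 :=
          Finset.sum_le_sum hpair
      _ = m' := by simp
  have ha0 : a 0 ≤ 1 := by simp only [ha]; split <;> [skip; omega]; split <;> omega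
  have hbm : b m' ≤ 1 := by simp only [hb]; split <;> [skip; omega]; split <;> omega
  have hab : (∑ k ∈ Finset.range m', a (k + 1)) + (∑ k ∈ Finset.range m', b k)
      = ∑ k ∈ Finset.range m', (a (k + 1) + b k) := (Finset.sum_add_distrib).symm
  rw [hdeg', hsa, hsb] at hdeg
  omega
end

section
/- Let D be a digraph on n ≥ 3 vertices containing a directed path P := x₁x₂…x_m with 2 ≤ m ≤ n−1, and let x be a vertex not contained in this path. If d(x,P) ≥ m+1 and moreover x x₁ ∉ A(D) or x_m x ∉ A(D), then there exists an index i with 1 ≤ i ≤ m−1 such that both x_i x and x x_{i+1} are arcs of D; that is, D contains the directed path x₁x₂…x_i x x_{i+1}…x_m of length m (x can be inserted into P). -/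
/-!
Pair the arc `x_i x` with the arc `x x_{i+1}` for `1 ≤ i ≤ m - 1`, and the arc `x x₁` with
`x_m x`. These `m` pairs cover every arc between `x` and `P`. If `x` cannot be inserted, each of
the first `m - 1` pairs contains at most one arc, and by assumption so does the last pair, so
`d(x, P) ≤ m`.
-/

variable {V : Type*}

open Finset

theorem Fin.card_filter_add_card_filter_le_of_not_consecutive {n : ℕ}
    (a b : Fin (n + 1) → Prop) [DecidablePred a] [DecidablePred b]
    (hab : ∀ i : Fin n, ¬ (b i.castSucc ∧ a i.succ)) (hend : ¬ a 0 ∨ ¬ b (Fin.last n)) :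
    #{i | a i} + #{i | b i} ≤ n + 1 := by
  have hpair : ∀ i : Fin n,
      (if b i.castSucc then 1 else 0) + (if a i.succ then 1 else 0) ≤ 1 := by
    intro i
    have := hab i
    split_ifs <;> simp_all
  have hpairs : ∑ i : Fin n, ((if b i.castSucc then 1 else 0) + (if a i.succ then 1 else 0)) ≤ n :=
    (sum_le_sum fun i _ => hpair i).trans (by simp)
  have hends : (if a 0 then 1 else 0) + (if b (Fin.last n) then 1 else 0) ≤ 1 := by
    rcases hend with h | h <;> split_ifs <;> simp_all
  rw [sum_add_distrib] at hpairs
  rw [card_filter, card_filter, Fin.sum_univ_succ, Fin.sum_univ_castSucc]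
  omega

theorem degOn_image_le {ι : Type*} [DecidableEq V] (A : V → V → Prop) [DecidableRel A]
    (x : V) (s : Finset ι) (p : ι → V) :
    degOn A x (s.image p) ≤ #{i ∈ s | A x (p i)} + #{i ∈ s | A (p i) x} := by
  rw [degOn, outDegOn, inDegOn, filter_image, filter_image]
  exact add_le_add card_image_le card_image_le

/-- Lemma 2 (ii). If a digraph on `n ≥ 3` vertices contains a path
`x₁x₂…x_m` (`2 ≤ m ≤ n-1`) and a vertex `x` off the path with `d(x,P) ≥ m+1`, and
moreover `x x₁ ∉ A(D)` or `x_m x ∉ A(D)`, then `x` can be inserted into the path. -/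
theorem insertion_of_degree_ge_add_one
    [DecidableEq V] (A : V → V → Prop) [DecidableRel A]
    (m : ℕ) (hm2 : 2 ≤ m)
    (p : Fin m → V)
    (x : V)
    (hdeg : m + 1 ≤ degOn A x (Finset.image p Finset.univ))
    (hend : ¬ A x (p ⟨0, by omega⟩) ∨ ¬ A (p ⟨m - 1, by omega⟩) x) :
    ∃ i j : Fin m, (j : ℕ) = (i : ℕ) + 1 ∧ A (p i) x ∧ A x (p j) := by
  by_contra! hins
  obtain ⟨n, rfl⟩ : ∃ n, m = n + 1 := ⟨m - 1, by omega⟩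
  have hcount := Fin.card_filter_add_card_filter_le_of_not_consecutive
    (fun i => A x (p i)) (fun i => A (p i) x)
    (fun i h => hins i.castSucc i.succ rfl h.1 h.2) hend
  have := (degOn_image_le A x univ p).trans hcount
  omega
end

section
/- Let P := x₁x₂…x_m be a directed path in a digraph D, and let x and y be vertices of V(D) − V(P) (possibly x = y). If there do not exist consecutive vertices x_i, x_{i+1} on P such that x_i x and y x_{i+1} are both arcs of D, then d⁻(x,P) + d⁺(y,P) ≤ m + ε, where ε = 1 if x_m x ∈ A(D) and ε = 0 otherwise. -/
variable {V : Type*}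

/-- Lemma 3. Let `P = x₁…x_m` be a path and `x, y` vertices off `P`
(possibly equal). If no consecutive pair `x_i, x_{i+1}` on `P` satisfies
`x_i x, y x_{i+1} ∈ A(D)`, then `d⁻(x,P) + d⁺(y,P) ≤ m + ε`, where `ε = 1` if
`x_m x ∈ A(D)` and `ε = 0` otherwise. -/
theorem in_out_degree_bound_of_no_insertion_pair
    [DecidableEq V] (A : V → V → Prop) [DecidableRel A]
    (hirr : ∀ v : V, ¬ A v v)
    (m : ℕ) (hm : 1 ≤ m)
    (p : Fin m → V) (hinj : Function.Injective p)
    (hpath : ∀ i j : Fin m, (j : ℕ) = (i : ℕ) + 1 → A (p i) (p j))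
    (x y : V) (hx : ∀ i : Fin m, x ≠ p i) (hy : ∀ i : Fin m, y ≠ p i)
    (hno : ¬ ∃ i j : Fin m, (j : ℕ) = (i : ℕ) + 1 ∧ A (p i) x ∧ A y (p j)) :
    inDegOn A x (Finset.image p Finset.univ) + outDegOn A y (Finset.image p Finset.univ)
      ≤ m + (if A (p ⟨m - 1, by omega⟩) x then 1 else 0) := by
  classical
  set S : Finset (Fin m) := Finset.univ.filter fun i => A (p i) x with hS
  set T : Finset (Fin m) := Finset.univ.filter fun i => A y (p i) with hT
  have hin : inDegOn A x (Finset.image p Finset.univ) = S.card := by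
    unfold inDegOn
    rw [Finset.filter_image, Finset.card_image_of_injective _ hinj]
  have hout : outDegOn A y (Finset.image p Finset.univ) = T.card := by
    unfold outDegOn
    rw [Finset.filter_image, Finset.card_image_of_injective _ hinj]
  rw [hin, hout]
  set last : Fin m := ⟨m - 1, by omega⟩ with hlast
  set S' : Finset (Fin m) := S.filter fun i => (i : ℕ) < m - 1 with hS'
  -- shift map
  set g : Fin m → Fin m := fun i =>
    if h : (i : ℕ) + 1 < m then ⟨(i : ℕ) + 1, h⟩ else i with hg
  have hginj : Set.InjOn g S' := by
    intro a ha b hb hab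
    rw [Finset.mem_coe, hS', Finset.mem_filter] at ha hb
    obtain ⟨-, ha2⟩ := ha
    obtain ⟨-, hb2⟩ := hb
    have ha' : (a : ℕ) + 1 < m := by omega
    have hb' : (b : ℕ) + 1 < m := by omega
    simp only [hg, dif_pos ha', dif_pos hb'] at hab
    have hv : (a : ℕ) + 1 = (b : ℕ) + 1 := congrArg Fin.val hab
    exact Fin.ext (by omega)
  have hdisj : ∀ i ∈ S', g i ∉ T := by
    intro i hi hgT
    simp only [hS', hS, Finset.mem_filter] at hi
    obtain ⟨⟨-, hiS⟩, hi2⟩ := hi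
    have h1 : (i : ℕ) + 1 < m := by omega
    simp only [hg, dif_pos h1, hT, Finset.mem_filter] at hgT
    exact hno ⟨i, ⟨(i : ℕ) + 1, h1⟩, rfl, hiS, hgT.2⟩
  have himg : S'.image g ⊆ Tᶜ := by
    intro j hj
    rw [Finset.mem_image] at hj
    obtain ⟨i, hi, rfl⟩ := hj
    simpa using hdisj i hi
  have h1 : S'.card + T.card ≤ m := by
    have : (S'.image g).card + T.card ≤ m := by
      have hsub : S'.image g ∪ T ⊆ Finset.univ := Finset.subset_univ _
      have hd : Disjoint (S'.image g) T := by
        rw [Finset.disjoint_left]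
        intro a ha haT
        exact (Finset.mem_compl.mp (himg ha)) haT
      calc (S'.image g).card + T.card = (S'.image g ∪ T).card :=
            (Finset.card_union_of_disjoint hd).symm
        _ ≤ Finset.univ.card := Finset.card_le_card hsub
        _ = m := by simp
    rwa [Finset.card_image_of_injOn hginj] at this
  have h2 : S.card ≤ S'.card + (if A (p last) x then 1 else 0) := by
    by_cases hlx : A (p last) x
    · rw [if_pos hlx]
      have : S ⊆ insert last S' := by
        intro i hi
        rcases Nat.lt_or_ge (i : ℕ) (m - 1) with h | h
        · exact Finset.mem_insert_of_mem (by simp [hS', hi, h])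
        · have : i = last := Fin.ext (by have := i.isLt; simp [hlast]; omega)
          simp [this]
      calc S.card ≤ (insert last S').card := Finset.card_le_card this
        _ ≤ S'.card + 1 := Finset.card_insert_le _ _
    · rw [if_neg hlx]
      have : S ⊆ S' := by
        intro i hi
        have hiS := hi
        simp only [hS, Finset.mem_filter] at hiS
        rcases Nat.lt_or_ge (i : ℕ) (m - 1) with h | h
        · simp [hS', hi, h]
        · exfalso
          have : i = last := Fin.ext (by have := i.isLt; simp [hlast]; omega)
          exact hlx (this ▸ hiS.2)
      exact Finset.card_le_card this
  omega
end

section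
/- Let D be a strongly connected digraph on n ≥ 2 vertices such that for every pair of non-adjacent vertices x, y that have a common out-neighbour or a common in-neighbour, one has min{d⁺(x)+d⁻(y), d⁻(x)+d⁺(y)} ≥ n−1 and d(x)+d(y) ≥ 2n−1. Suppose D is not Hamiltonian, and let C := x₁x₂…x_m x₁ be a longest cycle of D. Then D contains a C-bypass, i.e., a directed path of length at least two whose two end-vertices lie on C, whose internal vertices do not lie on C, and whose end-vertices are distinct. -/
variable {V : Type*}

/-! If there is no `C`-bypass, every vertex `w` off `C` is attached to a single vertex `a` of `C`:
every path from `C` to `w` and every path from `w` to `C` whose inner vertices avoid `C` starts,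
resp. ends, at `a`, since joining two such paths with distinct ends on `C` would give a bypass,
and strong connectivity provides such paths. So every neighbour of a vertex attached at `a` is `a`
or is attached at `a`. Take `y` off `C` with an arc `a → y` and let `z` be the successor of `a`
on `C`. Then `y` and `z` are non-adjacent with the common in-neighbour `a`. If `s` vertices are
attached at `a`, the neighbours of `y` lie among `a` and the other `s - 1` of them, and those of
`z` among the `n - 1 - s` vertices that are neither `z` nor attached at `a`. Hence
`d(y) + d(z) ≤ 2n - 2`, contradicting the degree condition. -/

open Relation List

theorem Relation.ReflTransGen.exists_nodup_isChain {α : Type*} {r : α → α → Prop} {a b : α}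
    (h : ReflTransGen r a b) :
    ∃ l : List α, IsChain r (a :: l) ∧ (a :: l).Nodup ∧ (a :: l).getLast? = some b := by
  induction h using Relation.ReflTransGen.head_induction_on with
  | refl => exact ⟨[], by simp, by simp, by simp⟩
  | @head a a' haa' _ ih =>
    obtain ⟨l, hch, hnd, hlast⟩ := ih
    by_cases ha : a ∈ a' :: l
    · obtain ⟨p, q, hpq⟩ := append_of_mem ha
      rw [hpq] at hch hnd hlast
      exact ⟨q, hch.right_of_append, hnd.of_append_right,
        by rwa [getLast?_append_of_ne_nil _ (cons_ne_nil _ _)] at hlast⟩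
    · exact ⟨a' :: l, hch.cons (by simpa), nodup_cons.2 ⟨ha, hnd⟩, by simpa⟩

theorem finRot_one_ne {m : ℕ} (hm : 2 ≤ m) (i : Fin m) : finRot i 1 ≠ i := by
  intro h
  have h' := congrArg Fin.val h
  simp only [finRot] at h'
  rcases Nat.lt_or_ge (i.val + 1) m with hlt | hge
  · rw [Nat.mod_eq_of_lt hlt] at h'
    omega
  · rw [show i.val + 1 = m by omega, Nat.mod_self] at h'
    omega

theorem exists_notMem_range_of_injective [Fintype V] {m : ℕ} {c : Fin m → V}
    (hc : Function.Injective c) (hm : m ≠ Fintype.card V) : ∃ v, v ∉ Set.range c := by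
  by_contra! h
  exact hm (by simpa using Fintype.card_of_bijective ⟨hc, h⟩)

section Degree

variable [Fintype V] {A : V → V → Prop} [DecidableRel A]

theorem deg_le_two_mul_card {x : V} {T : Finset V} (h : ∀ v, A x v ∨ A v x → v ∈ T) :
    deg A x ≤ 2 * T.card := by
  have hout : outDeg A x ≤ T.card :=
    Finset.card_le_card fun v hv => h v (Or.inl (Finset.mem_filter.1 hv).2)
  have hin : inDeg A x ≤ T.card :=
    Finset.card_le_card fun v hv => h v (Or.inr (Finset.mem_filter.1 hv).2)
  unfold deg
  omega

theorem deg_add_deg_add_two_le [DecidableEq V] {a y z : V} {S : Finset V} (hy : y ∈ S)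
    (hz : z ∉ S) (hyN : ∀ x, A y x ∨ A x y → x ∈ insert a (S.erase y))
    (hzN : ∀ x, A z x ∨ A x z → x ∈ (insert z S)ᶜ) :
    deg A y + deg A z + 2 ≤ 2 * Fintype.card V := by
  have hdy := (deg_le_two_mul_card hyN).trans
    (Nat.mul_le_mul_left 2 (Finset.card_insert_le a (S.erase y)))
  have hdz := deg_le_two_mul_card hzN
  rw [Finset.card_erase_of_mem hy] at hdy
  rw [Finset.card_compl, Finset.card_insert_of_notMem hz] at hdz
  have hS : (insert z S).card ≤ Fintype.card V := Finset.card_le_univ _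
  rw [Finset.card_insert_of_notMem hz] at hS
  have : 0 < S.card := Finset.card_pos.2 ⟨y, hy⟩
  omega

end Degree

/-- With `a ∈ S`, `TransGen (ArcOff A S) a w` says there is a path from `a` to `w` all of whose
vertices after `a` avoid `S`. -/
def ArcOff (A : V → V → Prop) (S : Set V) (x y : V) : Prop :=
  A x y ∧ y ∉ S

section Paths

variable {A : V → V → Prop} {S : Set V}

theorem notMem_of_transGen_arcOff {a w : V} (h : TransGen (ArcOff A S) a w) : w ∉ S :=
  (TransGen.tail'_iff.1 h).choose_spec.2.2

theorem exists_reflTransGen_arcOff_of_transGen {w v : V} (h : TransGen A w v) (hv : v ∈ S) :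
    ∃ w₁ b, ReflTransGen (ArcOff A S) w w₁ ∧ A w₁ b ∧ b ∈ S := by
  induction h using TransGen.head_induction_on with
  | single hwv => exact ⟨_, v, .refl, hwv, hv⟩
  | @head w x hwx _ ih =>
    by_cases hx : x ∈ S
    · exact ⟨w, x, .refl, hwx, hx⟩
    · obtain ⟨w₁, b, hxw₁, hw₁b, hb⟩ := ih
      exact ⟨w₁, b, hxw₁.head ⟨hwx, hx⟩, hw₁b, hb⟩

theorem exists_transGen_arcOff_of_transGen {v w : V} (h : TransGen A v w) (hv : v ∈ S)
    (hw : w ∉ S) :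
    ∃ a ∈ S, TransGen (ArcOff A S) a w := by
  induction h with
  | single hvw => exact ⟨v, hv, .single ⟨hvw, hw⟩⟩
  | @tail x w _ hxw ih =>
    by_cases hx : x ∈ S
    · exact ⟨x, hx, .single ⟨hxw, hw⟩⟩
    · obtain ⟨a, ha, hax⟩ := ih hx
      exact ⟨a, ha, hax.tail ⟨hxw, hw⟩⟩

end Paths

def HasBypass (A : V → V → Prop) {m : ℕ} (c : Fin m → V) : Prop :=
  ∃ (s : ℕ) (_ : 3 ≤ s) (u : Fin s → V),
    Function.Injective u ∧
    (∀ i j : Fin s, (j : ℕ) = (i : ℕ) + 1 → A (u i) (u j)) ∧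
    (∃ i : Fin m, u ⟨0, by omega⟩ = c i) ∧
    (∃ i : Fin m, u ⟨s - 1, by omega⟩ = c i) ∧
    u ⟨0, by omega⟩ ≠ u ⟨s - 1, by omega⟩ ∧
    (∀ t : Fin s, 0 < (t : ℕ) → (t : ℕ) < s - 1 → ∀ i : Fin m, u t ≠ c i)

section Bypass

variable {A : V → V → Prop} {m : ℕ} {c : Fin m → V}

theorem hasBypass_of_isChain {a b : V} {l : List V} (ha : a ∈ Set.range c)
    (hb : b ∈ Set.range c) (hab : a ≠ b) (hl : l ≠ []) (hnd : l.Nodup)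
    (hoff : ∀ x ∈ l, x ∉ Set.range c) (hch : IsChain A (a :: (l ++ [b]))) :
    HasBypass A c := by
  set L := a :: (l ++ [b])
  have hlen : L.length = l.length + 2 := by simp [L]
  have hl0 : 0 < l.length := length_pos_iff.2 hl
  have hnd : L.Nodup := by
    refine nodup_cons.2 ⟨?_, hnd.append (nodup_singleton b) ?_⟩
    · simpa [hab] using fun h => hoff a h ha
    · simpa using fun h => hoff b h hb
  have hlast : L[L.length - 1] = b := by
    simp [L]
  refine ⟨L.length, by omega, L.get, nodup_iff_injective_get.1 hnd, ?_, ?_, ?_, ?_, ?_⟩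
  · rintro ⟨i, hi⟩ ⟨j, hj⟩ rfl
    exact isChain_iff_getElem.1 hch i (by omega)
  · exact ha.imp fun _ h => h.symm
  · exact hb.imp fun _ h => by simpa [hlast] using h.symm
  · simpa [hlast, L] using hab
  · rintro ⟨t, ht⟩ ht0 ht1 i hi
    simp only at ht0 ht1
    obtain ⟨t, rfl⟩ : ∃ k, t = k + 1 := ⟨t - 1, by omega⟩
    refine hoff l[t] (getElem_mem _) ⟨i, ?_⟩
    simpa [L, getElem_append_left (show t < l.length by omega)] using hi.symm

theorem hasBypass_of_transGen_arcOff {a b w : V} (ha : a ∈ Set.range c) (hb : b ∈ Set.range c)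
    (hab : a ≠ b) (haw : TransGen (ArcOff A (Set.range c)) a w) (hwb : A w b) :
    HasBypass A c := by
  obtain ⟨w₀, ⟨haw₀, hw₀⟩, hw₀w⟩ := TransGen.head'_iff.1 haw
  obtain ⟨l, hch, hnd, hlast⟩ := hw₀w.exists_nodup_isChain
  have hoff : ∀ x ∈ w₀ :: l, x ∉ Set.range c :=
    forall_mem_cons.2 ⟨hw₀, hch.cons_induction _ _ (fun _ _ h _ => h.2) hw₀⟩
  refine hasBypass_of_isChain ha hb hab (cons_ne_nil _ _) hnd hoff
    (((hch.imp fun _ _ h => h.1).append (isChain_singleton b) ?_).cons ?_)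
  · simpa [hlast] using hwb
  · simpa using haw₀

end Bypass

section NoBypass

variable {A : V → V → Prop} {m : ℕ} {c : Fin m → V}

theorem eq_of_transGen_arcOff (hnb : ¬ HasBypass A c)
    (hstrong : ∀ u v : V, u ≠ v → TransGen A u v) (i₀ : Fin m) {a a' w : V}
    (ha : a ∈ Set.range c) (ha' : a' ∈ Set.range c)
    (haw : TransGen (ArcOff A (Set.range c)) a w)
    (ha'w : TransGen (ArcOff A (Set.range c)) a' w) : a = a' := by
  have hw := notMem_of_transGen_arcOff haw
  obtain ⟨w₁, b, hww₁, hw₁b, hb⟩ :=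
    exists_reflTransGen_arcOff_of_transGen (S := Set.range c)
      (hstrong w (c i₀) fun h => hw ⟨i₀, h.symm⟩) ⟨i₀, rfl⟩
  have key : ∀ x ∈ Set.range c, TransGen (ArcOff A (Set.range c)) x w → x = b := fun x hx hxw =>
    by_contra fun hxb => hnb (hasBypass_of_transGen_arcOff hx hb hxb (hxw.trans_left hww₁) hw₁b)
  rw [key a ha haw, key a' ha' ha'w]

theorem eq_or_transGen_arcOff_of_adj (hnb : ¬ HasBypass A c)
    (hstrong : ∀ u v : V, u ≠ v → TransGen A u v) (i₀ : Fin m) {a v x : V}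
    (ha : a ∈ Set.range c) (hav : TransGen (ArcOff A (Set.range c)) a v)
    (hvx : A v x ∨ A x v) : x = a ∨ TransGen (ArcOff A (Set.range c)) a x := by
  have hv := notMem_of_transGen_arcOff hav
  by_cases hx : x ∈ Set.range c
  · left
    rcases hvx with hvx | hxv
    · exact (by_contra fun hax => hnb (hasBypass_of_transGen_arcOff ha hx hax hav hvx)).symm
    · exact eq_of_transGen_arcOff hnb hstrong i₀ hx ha (.single ⟨hxv, hv⟩) hav
  · right
    rcases hvx with hvx | hxv
    · exact hav.tail ⟨hvx, hx⟩
    · obtain ⟨a', ha', ha'x⟩ := exists_transGen_arcOff_of_transGen (S := Set.range c)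
        (hstrong (c i₀) x fun h => hx ⟨i₀, h⟩) ⟨i₀, rfl⟩ hx
      rwa [eq_of_transGen_arcOff hnb hstrong i₀ ha' ha (ha'x.tail ⟨hxv, hv⟩) hav] at ha'x

theorem eq_of_adj_of_mem_range (hnb : ¬ HasBypass A c)
    (hstrong : ∀ u v : V, u ≠ v → TransGen A u v) (i₀ : Fin m) {a v x : V}
    (ha : a ∈ Set.range c) (hx : x ∈ Set.range c) (hav : TransGen (ArcOff A (Set.range c)) a v)
    (hvx : A v x ∨ A x v) : x = a :=
  (eq_or_transGen_arcOff_of_adj hnb hstrong i₀ ha hav hvx).resolve_right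
    fun hax => notMem_of_transGen_arcOff hax hx

end NoBypass

/-- Claim 2. If a strong digraph on `n ≥ 2` vertices satisfies the
degree condition on good pairs but is not Hamiltonian, and `C` is a longest cycle,
then `D` contains a `C`-bypass. -/
theorem exists_bypass_of_longest_cycle
    [Fintype V] (A : V → V → Prop) [DecidableRel A]
    (hirr : ∀ v : V, ¬ A v v)
    (n : ℕ) (hn : n = Fintype.card V)
    (hstrong : ∀ u v : V, u ≠ v → Relation.TransGen A u v)
    (hcond : ∀ x y : V, x ≠ y → ¬ A x y → ¬ A y x →
      (∃ z : V, (A x z ∧ A y z) ∨ (A z x ∧ A z y)) →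
      n - 1 ≤ min (outDeg A x + inDeg A y) (inDeg A x + outDeg A y) ∧
      2 * n - 1 ≤ deg A x + deg A y)
    (hnotham : ¬ ∃ c : Fin n → V, IsCycle A c)
    (m : ℕ) (hm2 : 2 ≤ m) (c : Fin m → V) (hc : IsCycle A c) :
    ∃ (s : ℕ) (_ : 3 ≤ s) (u : Fin s → V),
      Function.Injective u ∧
      (∀ i j : Fin s, (j : ℕ) = (i : ℕ) + 1 → A (u i) (u j)) ∧
      (∃ i : Fin m, u ⟨0, by omega⟩ = c i) ∧
      (∃ i : Fin m, u ⟨s - 1, by omega⟩ = c i) ∧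
      u ⟨0, by omega⟩ ≠ u ⟨s - 1, by omega⟩ ∧
      (∀ t : Fin s, 0 < (t : ℕ) → (t : ℕ) < s - 1 → ∀ i : Fin m, u t ≠ c i) := by
  classical
  by_contra hnb
  change ¬ HasBypass A c at hnb
  have i₀ : Fin m := ⟨0, by omega⟩
  obtain ⟨w, hw⟩ := exists_notMem_range_of_injective hc.1
    (by rintro rfl; subst hn; exact hnotham ⟨c, hc⟩)
  obtain ⟨_, ⟨j, rfl⟩, hjw⟩ := exists_transGen_arcOff_of_transGen (S := Set.range c)
    (hstrong (c i₀) w fun h => hw ⟨i₀, h⟩) ⟨i₀, rfl⟩ hw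
  obtain ⟨y, hjy, -⟩ := TransGen.head'_iff.1 hjw
  set z := c (finRot j 1)
  have hzj : z ≠ c j := hc.1.ne (finRot_one_ne hm2 j)
  set S := Finset.univ.filter (TransGen (ArcOff A (Set.range c)) (c j))
  have hyS : y ∈ S := by simpa [S] using TransGen.single hjy
  have hzS : z ∉ S := fun h => notMem_of_transGen_arcOff (Finset.mem_filter.1 h).2 ⟨_, rfl⟩
  have hyN (x) (hx : A y x ∨ A x y) : x ∈ insert (c j) (S.erase y) := by
    have hxy : x ≠ y := by rintro rfl; exact hirr _ (hx.elim id id)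
    rcases eq_or_transGen_arcOff_of_adj hnb hstrong i₀ ⟨j, rfl⟩ (.single hjy) hx with rfl | hjx
    · exact Finset.mem_insert_self _ _
    · simp [S, hxy, hjx]
  have hzN (x) (hx : A z x ∨ A x z) : x ∈ (insert z S)ᶜ := by
    have hxz : x ≠ z := by rintro rfl; exact hirr _ (hx.elim id id)
    have hxS : x ∉ S := fun hxS => hzj <| eq_of_adj_of_mem_range hnb hstrong i₀ ⟨j, rfl⟩
      ⟨_, rfl⟩ (Finset.mem_filter.1 hxS).2 hx.symm
    simp [hxz, hxS]
  have hyz : ¬ (A y z ∨ A z y) := fun h =>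
    hzj <| eq_of_adj_of_mem_range hnb hstrong i₀ ⟨j, rfl⟩ ⟨_, rfl⟩ (.single hjy) h
  have hdeg := (hcond y z (fun h => hjy.2 (h ▸ ⟨_, rfl⟩)) (hyz <| .inl ·) (hyz <| .inr ·)
    ⟨c j, .inr ⟨hjy.1, hc.2 j⟩⟩).2
  have := deg_add_deg_add_two_le hyS hzS hyN hzN
  omega
end

section
/- Let D be a strongly connected digraph on n vertices, not a directed cycle, such that for every pair of non-adjacent vertices x, y that have a common out-neighbour or a common in-neighbour, one has min{d⁺(x)+d⁻(y), d⁻(x)+d⁺(y)} ≥ n−1 and d(x)+d(y) ≥ 2n−1. Suppose D contains no cycle of length n−1 and no cycle of length n−2, and let C := x₁x₂…x_m x₁ be a longest non-Hamiltonian cycle of D (so 3 ≤ m ≤ n−3). If y is a vertex not on C such that x_m y and y x_{γ+1} are arcs of D (so x_m y x_{γ+1} is a C-bypass) and there are no arcs between y and any vertex of the subpath C[x₁, x_γ], then γ ≥ 3. -/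
variable {V : Type*}

/-!
Write `Q t` for the paper's `x_{t+1}` and suppose `γ ≤ 2`. As `n ≥ m + 3`, the maximality of
`C` forbids cycles of length `m + 1` and `m + 2`, and each of the following would produce one:
inserting `y` between consecutive vertices of `C`; a path `y r Q g` or `Q g r y` with `g < γ`
through a vertex `r` off `C` and `y`; inserting `Q 0` into the cycle `y Q 1 … Q (m-1)` when
`γ = 1`; inserting both `Q 0` and `Q 1` into the cycle `y Q 2 … Q (m-1)` when `γ = 2`.
Hence some `Q g` with `g < γ`, non-adjacent to `y` and sharing the neighbour `Q (m-1)` or `Q 2`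
with it, can, like `y`, not be inserted into the path `P = Q γ … Q (m-1)`. A vertex that cannot
be inserted into a path on `k` vertices has at most `k + 1` arcs to and from it, and a vertex off
`P` has at most two arcs to and from `y` and `Q g` together, so `d(y) + d(Q g) ≤ 2n - 2`,
against the degree condition.
-/

theorem exists_isCycle_of_isChain {A : V → V → Prop} {v : V} {l : List V}
    (hnd : (v :: l).Nodup) (hch : (v :: (l ++ [v])).IsChain A) :
    ∃ c : Fin (l.length + 1) → V, IsCycle A c := by
  rw [← List.cons_append] at hch
  refine ⟨(v :: l).get, List.nodup_iff_injective_get.1 hnd, fun i => ?_⟩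
  have harc := List.isChain_iff_getElem.1 hch i (by simp; omega)
  rw [List.getElem_append_left (by simp [Nat.lt_succ_iff.1 i.2])] at harc
  by_cases hi : (i : ℕ) + 1 < l.length + 1
  · have hrot : finRot i 1 = ⟨i + 1, hi⟩ := Fin.ext (Nat.mod_eq_of_lt hi)
    rw [hrot]
    rwa [List.getElem_append_left (by simpa using hi)] at harc
  · have hil : (i : ℕ) = l.length := by omega
    have hrot : finRot i 1 = ⟨0, by omega⟩ := Fin.ext (by simp [finRot, hil])
    rw [hrot]
    simpa [List.getElem_append_right, hil] using harc

def NoCycleBetween (A : V → V → Prop) (m n : ℕ) : Prop :=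
  ∀ (k : ℕ) (d : Fin k → V), k < n → IsCycle A d → k ≤ m

theorem length_le_of_isChain_closed {A : V → V → Prop} {n m : ℕ}
    (hlongest : NoCycleBetween A m n)
    {v : V} {l : List V} (hnd : (v :: l).Nodup) (hch : (v :: (l ++ [v])).IsChain A)
    (hn : l.length + 1 < n) : l.length + 1 ≤ m :=
  have ⟨_, hc⟩ := exists_isCycle_of_isChain hnd hch
  hlongest _ _ hn hc

structure IsCycleSeq (A : V → V → Prop) (m : ℕ) (Q : ℕ → V) : Prop where
  injOn : Set.InjOn Q (Set.Iio m)
  rel_succ : ∀ t, t + 1 < m → A (Q t) (Q (t + 1))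
  rel_last : A (Q (m - 1)) (Q 0)

theorem IsCycle.isCycleSeq {A : V → V → Prop} {m : ℕ} {c : Fin m → V} (hc : IsCycle A c)
    (hm : 0 < m) : IsCycleSeq A m (fun t => c ⟨t % m, Nat.mod_lt t hm⟩) := by
  have hsucc :
      ∀ t, A (c ⟨t % m, Nat.mod_lt t hm⟩) (c ⟨(t + 1) % m, Nat.mod_lt _ hm⟩) := by
    intro t
    convert hc.2 ⟨t % m, Nat.mod_lt t hm⟩ using 3
    simp [finRot, Nat.add_mod]
  refine ⟨fun s hs t ht hst => ?_, fun t _ => hsucc t, ?_⟩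
  · simpa [Nat.mod_eq_of_lt (Set.mem_Iio.1 hs), Nat.mod_eq_of_lt (Set.mem_Iio.1 ht)]
      using congrArg Fin.val (hc.1 hst)
  · simpa [Nat.sub_add_cancel hm] using hsucc (m - 1)

section CycleSeq

variable {A : V → V → Prop} {m : ℕ} {Q : ℕ → V}

theorem IsCycleSeq.isChain_cons_map_Ico_append (hC : IsCycleSeq A m Q) {x : V} {a b : ℕ}
    {l : List V} (hx : A x (Q a)) (hab : a < b) (hbm : b ≤ m) (hl : (Q (b - 1) :: l).IsChain A) :
    (x :: ((List.Ico a b).map Q ++ l)).IsChain A := by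
  induction b, hab using Nat.le_induction generalizing l with
  | base => simpa [List.Ico.succ_singleton, hx] using hl
  | succ b hab ih =>
    rw [List.Ico.succ_top (by omega), List.map_append, List.append_assoc]
    refine ih (by omega) (List.isChain_cons_cons.2 ⟨?_, hl⟩)
    simpa [Nat.sub_add_cancel (show 1 ≤ b by omega)] using hC.rel_succ (b - 1) (by omega)

theorem nodup_cons_append_map (hQ : Set.InjOn Q (Set.Iio m)) {v : V} {us : List V}
    {idx : List ℕ} (hus : (v :: us).Nodup) (hoff : ∀ u ∈ v :: us, ∀ t < m, u ≠ Q t)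
    (hidx : idx.Nodup) (hlt : ∀ t ∈ idx, t < m) : (v :: (us ++ idx.map Q)).Nodup := by
  rw [← List.cons_append, List.nodup_append]
  refine ⟨hus, hidx.map_on fun s hs t ht => hQ (hlt s hs) (hlt t ht), ?_⟩
  rintro u hu _ hw rfl
  obtain ⟨t, ht, rfl⟩ := List.mem_map.1 hw
  exact hoff _ hu t (hlt t ht) rfl

end CycleSeq

section Walks

open List

variable {A : V → V → Prop} {n m : ℕ} {Q : ℕ → V}

theorem IsCycleSeq.not_insert (hC : IsCycleSeq A m Q)
    (hlongest : NoCycleBetween A m n) (hmn : m + 1 < n)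
    {v : V} (hv : ∀ t < m, v ≠ Q t) {i : ℕ} (hi : i + 1 < m) :
    ¬(A (Q i) v ∧ A v (Q (i + 1))) := by
  rintro ⟨h₁, h₂⟩
  refine absurd (length_le_of_isChain_closed hlongest
    (nodup_cons_append_map hC.injOn (us := []) (idx := Ico (i + 1) m ++ Ico 0 (i + 1))
      (by simp) (by simpa using hv) ?nodup ?lt) ?walk (by simp; omega)) (by simp; omega)
  case nodup => simp only [nodup_append, Ico.nodup, Ico.mem]; grind
  case lt => simp only [mem_append, Ico.mem]; omega
  case walk =>
    simpa using hC.isChain_cons_map_Ico_append h₂ (by omega) le_rfl <|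
      hC.isChain_cons_map_Ico_append (b := i + 1) hC.rel_last (by omega) (by omega) <|
      isChain_pair.2 h₁

theorem IsCycleSeq.not_rel_rel_of_rel_last (hC : IsCycleSeq A m Q)
    (hlongest : NoCycleBetween A m n) (hmn : m + 2 < n)
    {y r : V} (hy : ∀ t < m, y ≠ Q t) (hr : ∀ t < m, r ≠ Q t) (hry : r ≠ y)
    (hmy : A (Q (m - 1)) y) {g : ℕ} (hg : g ≤ 1) (hgm : g < m) :
    ¬(A y r ∧ A r (Q g)) := by
  rintro ⟨h₁, h₂⟩
  refine absurd (length_le_of_isChain_closed hlongest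
    (nodup_cons_append_map hC.injOn (us := [r]) (idx := Ico g m)
      (by simpa using hry.symm) (by simpa using ⟨hy, hr⟩) (Ico.nodup _ _) (by simp [Ico.mem]))
    ?walk (by simp; omega)) (by simp; omega)
  case walk =>
    simpa using isChain_cons_cons.2 ⟨h₁, hC.isChain_cons_map_Ico_append h₂ hgm le_rfl <|
      isChain_pair.2 hmy⟩

theorem IsCycleSeq.not_rel_rel_of_rel_ahead (hC : IsCycleSeq A m Q)
    (hlongest : NoCycleBetween A m n) (hmn : m + 2 < n)
    {y r : V} (hy : ∀ t < m, y ≠ Q t) (hr : ∀ t < m, r ≠ Q t) (hry : r ≠ y)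
    {γ : ℕ} (hyγ : A y (Q γ)) (hγm : γ < m) {g : ℕ} (hgγ : g < γ) (hγg : γ ≤ g + 2) :
    ¬(A (Q g) r ∧ A r y) := by
  rintro ⟨h₁, h₂⟩
  refine absurd (length_le_of_isChain_closed hlongest
    (nodup_cons_append_map hC.injOn (us := [y]) (idx := Ico γ m ++ Ico 0 (g + 1))
      (by simpa using hry) (by simpa using ⟨hr, hy⟩) ?nodup ?lt) ?walk (by simp; omega))
    (by simp; omega)
  case nodup => simp only [nodup_append, Ico.nodup, Ico.mem]; grind
  case lt => simp only [mem_append, Ico.mem]; omega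
  case walk =>
    simpa using isChain_cons_cons.2 ⟨h₂, hC.isChain_cons_map_Ico_append hyγ hγm le_rfl <|
      hC.isChain_cons_map_Ico_append (b := g + 1) hC.rel_last (by omega) (by omega) <|
      isChain_pair.2 h₁⟩

theorem IsCycleSeq.not_insert_zero (hC : IsCycleSeq A m Q)
    (hlongest : NoCycleBetween A m n) (hmn : m + 1 < n)
    {y : V} (hy : ∀ t < m, y ≠ Q t) (hmy : A (Q (m - 1)) y) (hy1 : A y (Q 1))
    {i : ℕ} (hi : 1 ≤ i) (him : i + 1 < m) :
    ¬(A (Q i) (Q 0) ∧ A (Q 0) (Q (i + 1))) := by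
  rintro ⟨h₁, h₂⟩
  refine absurd (length_le_of_isChain_closed hlongest
    (nodup_cons_append_map hC.injOn (us := []) (idx := Ico 1 (i + 1) ++ 0 :: Ico (i + 1) m)
      (by simp) (by simpa using hy) ?nodup ?lt) ?walk (by simp; omega)) (by simp; omega)
  case nodup => simp only [nodup_append, nodup_cons, Ico.nodup, Ico.mem, mem_cons]; grind
  case lt => simp only [mem_append, mem_cons, Ico.mem]; omega
  case walk =>
    simpa using hC.isChain_cons_map_Ico_append (b := i + 1) hy1 (by omega) (by omega) <|
      isChain_cons_cons.2 ⟨h₁, hC.isChain_cons_map_Ico_append h₂ (by omega) le_rfl <|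
      isChain_pair.2 hmy⟩

theorem IsCycleSeq.not_insert_one_of_insert_zero (hC : IsCycleSeq A m Q)
    (hlongest : NoCycleBetween A m n) (hmn : m + 1 < n)
    {y : V} (hy : ∀ t < m, y ≠ Q t) (hmy : A (Q (m - 1)) y) (hy2 : A y (Q 2))
    {i : ℕ} (hi : 2 ≤ i) (him : i + 1 < m) (hi₁ : A (Q i) (Q 0)) (hi₂ : A (Q 0) (Q (i + 1)))
    {j : ℕ} (hj : 2 ≤ j) (hjm : j + 1 < m) :
    ¬(A (Q j) (Q 1) ∧ A (Q 1) (Q (j + 1))) := by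
  rintro ⟨hj₁, hj₂⟩
  rcases lt_trichotomy i j with hij | rfl | hji
  · refine absurd (length_le_of_isChain_closed hlongest
      (nodup_cons_append_map hC.injOn (us := [])
        (idx := Ico 2 (i + 1) ++ 0 :: (Ico (i + 1) (j + 1) ++ 1 :: Ico (j + 1) m))
        (by simp) (by simpa using hy) ?nodup ?lt) ?walk (by simp; omega)) (by simp; omega)
    case nodup =>
      simp only [nodup_append, nodup_cons, Ico.nodup, Ico.mem, mem_cons, mem_append]; grind
    case lt => simp only [mem_append, mem_cons, Ico.mem]; omega
    case walk =>
      simpa using hC.isChain_cons_map_Ico_append (b := i + 1) hy2 (by omega) (by omega) <|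
        isChain_cons_cons.2 ⟨hi₁, hC.isChain_cons_map_Ico_append (b := j + 1) hi₂ (by omega)
        (by omega) <| isChain_cons_cons.2 ⟨hj₁, hC.isChain_cons_map_Ico_append hj₂ (by omega)
        le_rfl <| isChain_pair.2 hmy⟩⟩
  · refine absurd (length_le_of_isChain_closed hlongest
      (nodup_cons_append_map hC.injOn (us := [])
        (idx := Ico 2 (i + 1) ++ 0 :: 1 :: Ico (i + 1) m)
        (by simp) (by simpa using hy) ?nodup ?lt) ?walk (by simp; omega)) (by simp; omega)
    case nodup => simp only [nodup_append, nodup_cons, Ico.nodup, Ico.mem, mem_cons]; grind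
    case lt => simp only [mem_append, mem_cons, Ico.mem]; omega
    case walk =>
      simpa using hC.isChain_cons_map_Ico_append (b := i + 1) hy2 (by omega) (by omega) <|
        isChain_cons_cons.2 ⟨hi₁, isChain_cons_cons.2 ⟨hC.rel_succ 0 (by omega),
        hC.isChain_cons_map_Ico_append hj₂ (by omega) le_rfl <| isChain_pair.2 hmy⟩⟩
  · refine absurd (length_le_of_isChain_closed hlongest
      (nodup_cons_append_map hC.injOn (us := [])
        (idx := Ico 2 (j + 1) ++ 1 :: (Ico (j + 1) (i + 1) ++ 0 :: Ico (i + 1) m))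
        (by simp) (by simpa using hy) ?nodup ?lt) ?walk (by simp; omega)) (by simp; omega)
    case nodup =>
      simp only [nodup_append, nodup_cons, Ico.nodup, Ico.mem, mem_cons, mem_append]; grind
    case lt => simp only [mem_append, mem_cons, Ico.mem]; omega
    case walk =>
      simpa using hC.isChain_cons_map_Ico_append (b := j + 1) hy2 (by omega) (by omega) <|
        isChain_cons_cons.2 ⟨hj₁, hC.isChain_cons_map_Ico_append (b := i + 1) hj₂ (by omega)
        (by omega) <| isChain_cons_cons.2 ⟨hi₁, hC.isChain_cons_map_Ico_append hi₂ (by omega)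
        le_rfl <| isChain_pair.2 hmy⟩⟩

end Walks

section Counting

variable {A : V → V → Prop} [DecidableRel A]

theorem degOn_eq_sum (x : V) (S : Finset V) :
    degOn A x S = ∑ u ∈ S, ((if A x u then 1 else 0) + if A u x then 1 else 0) := by
  simp only [degOn, outDegOn, inDegOn, Finset.card_filter, Finset.sum_add_distrib]

theorem deg_eq_degOn_add_degOn_compl [Fintype V] [DecidableEq V] (x : V) (S : Finset V) :
    deg A x = degOn A x S + degOn A x Sᶜ := by
  rw [degOn_eq_sum, degOn_eq_sum, Finset.sum_add_sum_compl]
  simp only [deg, outDeg, inDeg, Finset.card_filter, Finset.sum_add_distrib]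

theorem degOn_image_Ico_le [DecidableEq V] {Q : ℕ → V} {a b : ℕ}
    (hQ : Set.InjOn Q (Set.Ico a b)) {v : V}
    (hv : ∀ i, a ≤ i → i + 1 < b → ¬(A (Q i) v ∧ A v (Q (i + 1)))) :
    degOn A v ((Finset.Ico a b).image Q) ≤ b - a + 1 := by
  set O := (Finset.Ico a b).filter fun i => A v (Q i)
  set I := (Finset.Ico a b).filter fun i => A (Q i) v
  have hinj : ∀ s ⊆ Finset.Ico a b, Set.InjOn Q ↑s :=
    fun s hs => hQ.mono (by simpa using Finset.coe_subset.2 hs)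
  have hdisj : Disjoint (I.image (· + 1)) O := by
    rw [Finset.disjoint_left]
    rintro _ hs ht
    obtain ⟨i, hi, rfl⟩ := Finset.mem_image.1 hs
    simp only [I, O, Finset.mem_filter, Finset.mem_Ico] at hi ht
    exact hv i hi.1.1 ht.1.2 ⟨hi.2, ht.2⟩
  have hsub : I.image (· + 1) ∪ O ⊆ Finset.Ico a (b + 1) := by
    intro t ht
    simp only [I, O, Finset.mem_union, Finset.mem_image, Finset.mem_filter,
      Finset.mem_Ico] at ht
    rw [Finset.mem_Ico]
    rcases ht with ⟨i, ⟨⟨_, _⟩, _⟩, rfl⟩ | ⟨⟨_, _⟩, _⟩ <;> omega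
  calc degOn A v ((Finset.Ico a b).image Q) = (I.image (· + 1)).card + O.card := by
        rw [degOn, outDegOn, inDegOn, Finset.filter_image, Finset.filter_image,
          Finset.card_image_of_injOn (hinj _ (Finset.filter_subset _ _)),
          Finset.card_image_of_injOn (hinj _ (Finset.filter_subset _ _)),
          Finset.card_image_of_injective _ (add_left_injective 1), add_comm]
    _ = (I.image (· + 1) ∪ O).card := (Finset.card_union_of_disjoint hdisj).symm
    _ ≤ (Finset.Ico a (b + 1)).card := Finset.card_le_card hsub
    _ ≤ b - a + 1 := by simp only [Nat.card_Ico]; omega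

theorem deg_add_deg_add_four_le [Fintype V] [DecidableEq V] (hirr : ∀ v, ¬A v v) {x w : V}
    (hxw : x ≠ w) (hxw' : ¬A x w) (hwx : ¬A w x) {S : Finset V} (hxS : x ∉ S) (hwS : w ∉ S)
    (hout : ∀ u ∉ S, u ≠ x → u ≠ w → ¬(A x u ∧ A u w) ∧ ¬(A w u ∧ A u x)) :
    deg A x + deg A w + 4 ≤ degOn A x S + degOn A w S + 2 * Sᶜ.card := by
  rw [deg_eq_degOn_add_degOn_compl x S, deg_eq_degOn_add_degOn_compl w S]
  suffices degOn A x Sᶜ + degOn A w Sᶜ + 4 ≤ 2 * Sᶜ.card by omega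
  have hle : ∀ u ∈ Sᶜ, ((if A x u then 1 else 0) + (if A u x then 1 else 0)) +
      ((if A w u then 1 else 0) + (if A u w then 1 else 0)) +
      ((if u = x then 2 else 0) + (if u = w then 2 else 0)) ≤ 2 := by
    intro u hu
    by_cases hux : u = x
    · subst hux; simp [hirr, hxw, hxw', hwx]
    by_cases huw : u = w
    · subst huw; simp [hirr, hxw.symm, hxw', hwx]
    have := hout u (Finset.mem_compl.1 hu) hux huw
    simp only [hux, huw, if_false]
    split_ifs <;> tauto
  calc degOn A x Sᶜ + degOn A w Sᶜ + 4
      = ∑ u ∈ Sᶜ, (((if A x u then 1 else 0) + (if A u x then 1 else 0)) +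
          ((if A w u then 1 else 0) + (if A u w then 1 else 0)) +
          ((if u = x then 2 else 0) + (if u = w then 2 else 0))) := by
        simp only [degOn_eq_sum, Finset.sum_add_distrib, Finset.sum_ite_eq', Finset.mem_compl,
          hxS, hwS, not_false_eq_true, if_true]
    _ ≤ ∑ _u ∈ Sᶜ, 2 := Finset.sum_le_sum hle
    _ = 2 * Sᶜ.card := by rw [Finset.sum_const, smul_eq_mul, mul_comm]

theorem deg_add_deg_add_two_le_s9 [Fintype V] [DecidableEq V] (hirr : ∀ v, ¬A v v) {x w : V}
    (hxw : x ≠ w) (hxw' : ¬A x w) (hwx : ¬A w x) {Q : ℕ → V} {a b : ℕ}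
    (hQ : Set.InjOn Q (Set.Ico a b))
    (hx : ∀ i, a ≤ i → i + 1 < b → ¬(A (Q i) x ∧ A x (Q (i + 1))))
    (hw : ∀ i, a ≤ i → i + 1 < b → ¬(A (Q i) w ∧ A w (Q (i + 1))))
    (hxP : x ∉ (Finset.Ico a b).image Q) (hwP : w ∉ (Finset.Ico a b).image Q)
    (hout : ∀ u ∉ (Finset.Ico a b).image Q, u ≠ x → u ≠ w →
      ¬(A x u ∧ A u w) ∧ ¬(A w u ∧ A u x)) :
    deg A x + deg A w + 2 ≤ 2 * Fintype.card V := by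
  have hsum := deg_add_deg_add_four_le hirr hxw hxw' hwx hxP hwP hout
  have hcard : ((Finset.Ico a b).image Q).card = b - a := by
    rw [Finset.card_image_of_injOn (by simpa using hQ), Nat.card_Ico]
  have := ((Finset.Ico a b).image Q).card_le_univ
  have := degOn_image_Ico_le hQ hx
  have := degOn_image_Ico_le hQ hw
  rw [Finset.card_compl] at hsum
  omega

end Counting

section Claim

variable {A : V → V → Prop} {n m : ℕ} {Q : ℕ → V} {y : V} {γ : ℕ}

theorem IsCycleSeq.exists_lt_not_insert (hC : IsCycleSeq A m Q)
    (hlongest : NoCycleBetween A m n) (hmn : m + 1 < n)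
    (hy : ∀ t < m, y ≠ Q t) (hmy : A (Q (m - 1)) y) (hyγ : A y (Q γ))
    (hγ : γ = 1 ∨ γ = 2) (hγm : γ + 2 ≤ m) :
    ∃ g < γ, (∃ z, (A y z ∧ A (Q g) z) ∨ (A z y ∧ A z (Q g))) ∧
      ∀ i, γ ≤ i → i + 1 < m → ¬(A (Q i) (Q g) ∧ A (Q g) (Q (i + 1))) := by
  by_cases h0 : ∀ i, γ ≤ i → i + 1 < m → ¬(A (Q i) (Q 0) ∧ A (Q 0) (Q (i + 1)))
  · exact ⟨0, by omega, ⟨Q (m - 1), Or.inr ⟨hmy, hC.rel_last⟩⟩, h0⟩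
  push Not at h0
  obtain ⟨i, hγi, him, hi₁, hi₂⟩ := h0
  rcases hγ with rfl | rfl
  · exact absurd ⟨hi₁, hi₂⟩ (hC.not_insert_zero hlongest hmn hy hmy hyγ hγi him)
  · exact ⟨1, one_lt_two, ⟨Q 2, Or.inl ⟨hyγ, hC.rel_succ 1 (by omega)⟩⟩, fun j hj hjm =>
      hC.not_insert_one_of_insert_zero hlongest hmn hy hmy hyγ hγi him hi₁ hi₂ hj hjm⟩

theorem IsCycleSeq.not_rel_rel_of_notMem_image [DecidableEq V] (hC : IsCycleSeq A m Q)
    (hlongest : NoCycleBetween A m n) (hmn : m + 2 < n)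
    (hy : ∀ t < m, y ≠ Q t) (hmy : A (Q (m - 1)) y) (hyγ : A y (Q γ)) (hγm : γ < m)
    (hnoarc : ∀ k < γ, ¬A y (Q k) ∧ ¬A (Q k) y) {g : ℕ} (hgγ : g < γ) (hγ2 : γ ≤ 2)
    {u : V} (hu : u ∉ (Finset.Ico γ m).image Q) (huy : u ≠ y) :
    ¬(A y u ∧ A u (Q g)) ∧ ¬(A (Q g) u ∧ A u y) := by
  by_cases hCu : ∃ t < m, u = Q t
  · obtain ⟨t, htm, rfl⟩ := hCu
    have htγ : t < γ := by
      by_contra! h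
      exact hu (Finset.mem_image_of_mem Q (Finset.mem_Ico.2 ⟨h, htm⟩))
    exact ⟨fun h => (hnoarc t htγ).1 h.1, fun h => (hnoarc t htγ).2 h.2⟩
  · push Not at hCu
    exact ⟨hC.not_rel_rel_of_rel_last hlongest hmn hy hCu huy hmy (by omega) (by omega),
      hC.not_rel_rel_of_rel_ahead hlongest hmn hy hCu huy hyγ hγm hgγ (by omega)⟩

end Claim

/-- Claim 3. Under the hypotheses of the main theorem, with `C` a
longest non-Hamiltonian cycle (so `3 ≤ m ≤ n-3`), if `x_m y x_{γ+1}` is a `C`-bypass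
and there are no arcs between `y` and `C[x₁, x_γ]`, then `γ ≥ 3`. -/
theorem claim3_gap_ge_three
    [Fintype V] [DecidableEq V] (A : V → V → Prop) [DecidableRel A]
    (hirr : ∀ v : V, ¬ A v v)
    (n : ℕ) (hn : n = Fintype.card V)
    (hcond : ∀ x y : V, x ≠ y → ¬ A x y → ¬ A y x →
      (∃ z : V, (A x z ∧ A y z) ∨ (A z x ∧ A z y)) →
      n - 1 ≤ min (outDeg A x + inDeg A y) (inDeg A x + outDeg A y) ∧
      2 * n - 1 ≤ deg A x + deg A y)
    (m : ℕ) (hmn : m ≤ n - 3)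
    (c : Fin m → V) (hc : IsCycle A c)
    (hlongest : ∀ (k : ℕ) (d : Fin k → V), k < n → IsCycle A d → k ≤ m)
    (y : V) (hy : ∀ i : Fin m, y ≠ c i)
    (γ : ℕ) (hγ1 : 1 ≤ γ) (hγ2 : γ + 2 ≤ m)
    (hmy : A (c ⟨m - 1, by omega⟩) y)
    (hyγ : A y (c ⟨γ, by omega⟩))
    (hnoarc : ∀ k : ℕ, (hk : k < γ) → ¬ A y (c ⟨k, by omega⟩) ∧ ¬ A (c ⟨k, by omega⟩) y) :
    3 ≤ γ := by
  by_contra! hγ3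
  have hm : 0 < m := by omega
  set Q : ℕ → V := fun t => c ⟨t % m, Nat.mod_lt t hm⟩
  have hC : IsCycleSeq A m Q := hc.isCycleSeq hm
  have hcQ : ∀ k (hk : k < m), c ⟨k, hk⟩ = Q k :=
    fun k hk => congrArg c (Fin.ext (Nat.mod_eq_of_lt hk).symm)
  have hyQ : ∀ t < m, y ≠ Q t := fun t ht => hcQ t ht ▸ hy ⟨t, ht⟩
  have hmy' : A (Q (m - 1)) y := hcQ _ _ ▸ hmy
  have hyγ' : A y (Q γ) := hcQ _ _ ▸ hyγ
  have hnoarc' : ∀ k < γ, ¬A y (Q k) ∧ ¬A (Q k) y :=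
    fun k hk => hcQ k (by omega) ▸ hnoarc k hk
  obtain ⟨g, hgγ, hz, hins⟩ :=
    hC.exists_lt_not_insert hlongest (by omega) hyQ hmy' hyγ' (by omega) (by omega)
  have hyP : y ∉ (Finset.Ico γ m).image Q := by simpa using fun t _ htm => (hyQ t htm).symm
  have hgP : Q g ∉ (Finset.Ico γ m).image Q := by
    simpa using fun t (_ : γ ≤ t) (htm : t < m) heq => by
      have := hC.injOn htm (by omega : g < m) heq; omega
  have hdeg := (hcond y (Q g) (hyQ g (by omega)) (hnoarc' g hgγ).1 (hnoarc' g hgγ).2 hz).2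
  have hcount := deg_add_deg_add_two_le_s9 hirr (hyQ g (by omega)) (hnoarc' g hgγ).1
    (hnoarc' g hgγ).2 (hC.injOn.mono Set.Ico_subset_Iio_self)
    (fun i _ him => hC.not_insert hlongest (by omega) hyQ him) hins hyP hgP
    (fun u hu huy _ => hC.not_rel_rel_of_notMem_image hlongest (by omega) hyQ hmy' hyγ'
      (by omega) hnoarc' hgγ (by omega) hu huy)
  omega
end
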